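/- arXiv:1208.5749 — 2 statements merged into one kernel-verified Lean document; each statement's English description precedes it below -/
import Mathlib

section
/- Take a = 1 in the rank-2 cluster recurrence. Then the set of values {x_k : k ≥ 1} is exactly the five-element set {X₁, X₂, (1 + X₂)/X₁, (1 + X₁ + X₂)/(X₁X₂), (1 + X₁)/X₂}, and these five rational functions are pairwise distinct. -/
/-- The field `ℚ(X₁, X₂)` of rational functions in two indeterminates over `ℚ`. -/
noncomputable abbrev F2 : Type := FractionRing (MvPolynomial (Fin 2) ℚ)

noncomputable def X₁ : F2 := algebraMap (MvPolynomial (Fin 2) ℚ) F2 (MvPolynomial.X 0)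
noncomputable def X₂ : F2 := algebraMap (MvPolynomial (Fin 2) ℚ) F2 (MvPolynomial.X 1)

/-- The rank-2 cluster recurrence: `x 1 = X₁`, `x 2 = X₂`,
`x (k+1) = (1 + x k ^ a) / x (k-1)` for `k ≥ 2`.  (`x 0` is a junk value.) -/
noncomputable def clusterSeq (a : ℕ) : ℕ → F2
  | 0 => 1
  | 1 => X₁
  | 2 => X₂
  | n + 3 => (1 + clusterSeq a (n + 2) ^ a) / clusterSeq a (n + 1)

/-!
For `a = 1` the recurrence is Lyness' 5-cycle: in any field, starting from `x, y` such that none of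
`x, y, 1 + x, 1 + y, 1 + x + y` vanishes, the iterates are `x, y, (1 + y) / x, (1 + x + y) / (x y),
(1 + x) / y` and then `x, y` again. The five rational functions are told apart by specializing at
`(X₁, X₂) = (5, 2)`, where they take the values `5, 2, 3/5, 4/5, 3`.
-/

section Lyness

variable {K : Type*} [Field K] {u : ℕ → K}

theorem lyness_three (hrec : ∀ n, u (n + 2) = (1 + u (n + 1)) / u n) (h0 : u 0 ≠ 0)
    (h1 : u 1 ≠ 0) : u 3 = (1 + u 0 + u 1) / (u 0 * u 1) := by
  rw [hrec 1, hrec 0]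
  field_simp
  ring

theorem lyness_four (hrec : ∀ n, u (n + 2) = (1 + u (n + 1)) / u n) (h0 : u 0 ≠ 0)
    (h1 : u 1 ≠ 0) (h1' : 1 + u 1 ≠ 0) : u 4 = (1 + u 0) / u 1 := by
  rw [hrec 2, lyness_three hrec h0 h1, hrec 0]
  field_simp
  ring

theorem lyness_five (hrec : ∀ n, u (n + 2) = (1 + u (n + 1)) / u n) (h0 : u 0 ≠ 0)
    (h1 : u 1 ≠ 0) (h1' : 1 + u 1 ≠ 0) (h01 : 1 + u 0 + u 1 ≠ 0) : u 5 = u 0 := by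
  rw [hrec 3, lyness_four hrec h0 h1 h1', lyness_three hrec h0 h1]
  field_simp
  ring

theorem lyness_six (hrec : ∀ n, u (n + 2) = (1 + u (n + 1)) / u n) (h0 : u 0 ≠ 0)
    (h1 : u 1 ≠ 0) (h0' : 1 + u 0 ≠ 0) (h1' : 1 + u 1 ≠ 0) (h01 : 1 + u 0 + u 1 ≠ 0) :
    u 6 = u 1 := by
  rw [hrec 4, lyness_five hrec h0 h1 h1' h01, lyness_four hrec h0 h1 h1']
  field_simp

theorem lyness_periodic (hrec : ∀ n, u (n + 2) = (1 + u (n + 1)) / u n) (h0 : u 0 ≠ 0)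
    (h1 : u 1 ≠ 0) (h0' : 1 + u 0 ≠ 0) (h1' : 1 + u 1 ≠ 0) (h01 : 1 + u 0 + u 1 ≠ 0) :
    Function.Periodic u 5 := by
  intro n
  induction n using Nat.twoStepInduction with
  | zero => exact lyness_five hrec h0 h1 h1' h01
  | one => exact lyness_six hrec h0 h1 h0' h1' h01
  | more n ih₀ ih₁ =>
    rw [hrec n, ← ih₀, ← ih₁]
    exact hrec (n + 5)

end Lyness

section FractionRing

variable {R K k : Type*} [CommRing R] [Field K] [Algebra R K] [IsFractionRing R K] [Field k]

theorem algebraMap_ne_zero_of_map_ne_zero (φ : R →+* k) {p : R} (hp : φ p ≠ 0) :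
    algebraMap R K p ≠ 0 :=
  (map_ne_zero_iff _ (IsFractionRing.injective R K)).2 fun h => hp (by rw [h, map_zero])

theorem algebraMap_div_ne_of_map_div_ne (φ : R →+* k) {p q r s : R} (hq : φ q ≠ 0)
    (hs : φ s ≠ 0) (h : φ p / φ q ≠ φ r / φ s) :
    algebraMap R K p / algebraMap R K q ≠ algebraMap R K r / algebraMap R K s := by
  rw [Ne, div_eq_div_iff (algebraMap_ne_zero_of_map_ne_zero φ hq)
    (algebraMap_ne_zero_of_map_ne_zero φ hs), ← map_mul, ← map_mul,
    (IsFractionRing.injective R K).eq_iff]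
  rw [Ne, div_eq_div_iff hq hs, ← map_mul, ← map_mul] at h
  exact fun hps => h (congrArg φ hps)

theorem pairwise_ne_algebraMap_div (φ : R →+* k) (L : List (R × R))
    (hden : ∀ pq ∈ L, φ pq.2 ≠ 0) (h : (L.map fun pq => φ pq.1 / φ pq.2).Pairwise Ne) :
    (L.map fun pq => algebraMap R K pq.1 / algebraMap R K pq.2).Pairwise Ne := by
  rw [List.pairwise_map] at h ⊢
  exact h.imp_of_mem fun ha hb => algebraMap_div_ne_of_map_div_ne φ (hden _ ha) (hden _ hb)

end FractionRing

section ClusterSeq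

open MvPolynomial

theorem X₁_ne_zero : X₁ ≠ 0 :=
  algebraMap_ne_zero_of_map_ne_zero (eval ![(5 : ℚ), 2]) (by simp)

theorem X₂_ne_zero : X₂ ≠ 0 :=
  algebraMap_ne_zero_of_map_ne_zero (eval ![(5 : ℚ), 2]) (by simp)

theorem one_add_X₁_ne_zero : 1 + X₁ ≠ 0 := by
  have h := algebraMap_ne_zero_of_map_ne_zero (K := F2) (eval ![(5 : ℚ), 2])
    (p := 1 + X 0) (by norm_num)
  rwa [map_add, map_one] at h

theorem one_add_X₂_ne_zero : 1 + X₂ ≠ 0 := by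
  have h := algebraMap_ne_zero_of_map_ne_zero (K := F2) (eval ![(5 : ℚ), 2])
    (p := 1 + X 1) (by norm_num)
  rwa [map_add, map_one] at h

theorem one_add_X₁_add_X₂_ne_zero : 1 + X₁ + X₂ ≠ 0 := by
  have h := algebraMap_ne_zero_of_map_ne_zero (K := F2) (eval ![(5 : ℚ), 2])
    (p := 1 + X 0 + X 1) (by norm_num)
  rwa [map_add, map_add, map_one] at h

theorem clusterSeq_one_add_three (n : ℕ) :
    clusterSeq 1 (n + 3) = (1 + clusterSeq 1 (n + 2)) / clusterSeq 1 (n + 1) := by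
  rw [clusterSeq, pow_one]

theorem clusterSeq_one_periodic : Function.Periodic (fun n => clusterSeq 1 (n + 1)) 5 :=
  lyness_periodic clusterSeq_one_add_three X₁_ne_zero X₂_ne_zero one_add_X₁_ne_zero
    one_add_X₂_ne_zero one_add_X₁_add_X₂_ne_zero

theorem clusterSeq_one_range :
    {y : F2 | ∃ k ≥ 1, clusterSeq 1 k = y} =
      {X₁, X₂, (1 + X₂) / X₁, (1 + X₁ + X₂) / (X₁ * X₂), (1 + X₁) / X₂} := by
  have h3 : clusterSeq 1 3 = (1 + X₂) / X₁ := clusterSeq_one_add_three 0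
  have h4 : clusterSeq 1 4 = (1 + X₁ + X₂) / (X₁ * X₂) :=
    lyness_three (u := fun n => clusterSeq 1 (n + 1)) clusterSeq_one_add_three X₁_ne_zero X₂_ne_zero
  have h5 : clusterSeq 1 5 = (1 + X₁) / X₂ :=
    lyness_four (u := fun n => clusterSeq 1 (n + 1)) clusterSeq_one_add_three X₁_ne_zero X₂_ne_zero
      one_add_X₂_ne_zero
  ext y
  constructor
  · rintro ⟨k, hk, rfl⟩
    obtain ⟨n, rfl⟩ := Nat.exists_eq_add_of_le' hk
    rw [← clusterSeq_one_periodic.map_mod_nat n]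
    have hn : n % 5 < 5 := Nat.mod_lt n (by norm_num)
    interval_cases n % 5 <;> simp [clusterSeq.eq_2, clusterSeq.eq_3, h3, h4, h5]
  · rintro (rfl | rfl | rfl | rfl | rfl)
    exacts [⟨1, le_rfl, rfl⟩, ⟨2, by norm_num, rfl⟩, ⟨3, by norm_num, h3⟩, ⟨4, by norm_num, h4⟩,
      ⟨5, by norm_num, h5⟩]

theorem pairwise_ne_clusterSeq_one_values :
    [X₁, X₂, (1 + X₂) / X₁, (1 + X₁ + X₂) / (X₁ * X₂), (1 + X₁) / X₂].Pairwise Ne := by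
  have h := pairwise_ne_algebraMap_div (K := F2) (eval ![(5 : ℚ), 2])
    [(X 0, 1), (X 1, 1), (1 + X 1, X 0), (1 + X 0 + X 1, X 0 * X 1), (1 + X 0, X 1)]
    (by simp) (by norm_num)
  simp only [List.map_cons, List.map_nil, map_add, map_one, map_mul, div_one] at h
  exact h

end ClusterSeq

theorem clusterSeq_range_five :
    {y : F2 | ∃ k ≥ 1, clusterSeq 1 k = y} =
      {X₁, X₂, (1 + X₂) / X₁, (1 + X₁ + X₂) / (X₁ * X₂), (1 + X₁) / X₂} ∧
    List.Pairwise Ne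
      [X₁, X₂, (1 + X₂) / X₁, (1 + X₁ + X₂) / (X₁ * X₂), (1 + X₁) / X₂] :=
  ⟨clusterSeq_one_range, pairwise_ne_clusterSeq_one_values⟩
end

section
/- The map from (ℂ \ {0})⁴ to the group SL₂(ℂ[z]) sending (t₁, t₂, t₃, t₄) to the product x₂(t₄) x₁(t₃) x₂(t₂) x₁(t₁) is injective. -/
open Polynomial

/-- The one-parameter subgroup `x₁(t) = exp(t e₁)` inside `SL₂(ℂ[z])`. -/
noncomputable def x₁ (t : ℂ) : Matrix (Fin 2) (Fin 2) (Polynomial ℂ) :=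
  !![1, C t; 0, 1]

/-- The one-parameter subgroup `x₂(t) = exp(t e₂)` inside `SL₂(ℂ[z])`. -/
noncomputable def x₂ (t : ℂ) : Matrix (Fin 2) (Fin 2) (Polynomial ℂ) :=
  !![1, 0; C t * X, 1]

/-!
The product `x₂(d) x₁(c) x₂(b) x₁(a)` has entries `1 + bc z`, `(a + c) + abc z` and
`(b + d) z + bcd z²` in the first column and row. Their coefficients determine `bc`, `a + c`,
`abc` and `b + d`, and when `bc ≠ 0` these four numbers determine `a`, `c`, `b`, `d` in turn.
-/

lemma x₂_mul_x₁_mul_x₂_mul_x₁ (a b c d : ℂ) :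
    x₂ d * x₁ c * x₂ b * x₁ a =
      !![1 + C (b * c) * X, C (a + c) + C (a * b * c) * X;
         C (b + d) * X + C (b * c * d) * X ^ 2,
         1 + C (a * b + a * d + c * d) * X + C (a * b * c * d) * X ^ 2] := by
  refine Matrix.ext fun i j => ?_
  fin_cases i <;> fin_cases j <;>
    simp [x₁, x₂, Matrix.mul_apply, Fin.sum_univ_two] <;> ring

lemma invariants_eq_of_x₂_mul_x₁_mul_x₂_mul_x₁_eq {a b c d a' b' c' d' : ℂ}
    (h : x₂ d * x₁ c * x₂ b * x₁ a = x₂ d' * x₁ c' * x₂ b' * x₁ a') :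
    b * c = b' * c' ∧ a + c = a' + c' ∧ a * (b * c) = a' * (b' * c') ∧ b + d = b' + d' := by
  rw [x₂_mul_x₁_mul_x₂_mul_x₁, x₂_mul_x₁_mul_x₂_mul_x₁] at h
  have h00 := congrArg (coeff · 1) (congrFun (congrFun h 0) 0)
  have h01₀ := congrArg (coeff · 0) (congrFun (congrFun h 0) 1)
  have h01₁ := congrArg (coeff · 1) (congrFun (congrFun h 0) 1)
  have h10 := congrArg (coeff · 1) (congrFun (congrFun h 1) 0)
  simp [mul_assoc, coeff_X_pow] at h00 h01₀ h01₁ h10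
  exact ⟨h00, h01₀, h01₁, h10⟩

lemma eq_of_invariants_eq {R : Type*} [CommRing R] [IsDomain R] {a b c d a' b' c' d' : R}
    (hb' : b' ≠ 0) (hc' : c' ≠ 0) (hbc : b * c = b' * c') (hac : a + c = a' + c')
    (habc : a * (b * c) = a' * (b' * c')) (hbd : b + d = b' + d') :
    a = a' ∧ b = b' ∧ c = c' ∧ d = d' := by
  have ha : a = a' :=
    mul_right_cancel₀ (mul_ne_zero hb' hc') (by rwa [hbc] at habc)
  have hc : c = c' := by linear_combination hac - ha
  have hb : b = b' := mul_right_cancel₀ hc' (by linear_combination hbc - b * hc)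
  exact ⟨ha, hb, hc, by linear_combination hbd - hb⟩

theorem x2121_injective_general (t₁ t₂ t₃ t₄ s₁ s₂ s₃ s₄ : ℂ)
    (hs₂ : s₂ ≠ 0) (hs₃ : s₃ ≠ 0)
    (h : x₂ t₄ * x₁ t₃ * x₂ t₂ * x₁ t₁ = x₂ s₄ * x₁ s₃ * x₂ s₂ * x₁ s₁) :
    t₁ = s₁ ∧ t₂ = s₂ ∧ t₃ = s₃ ∧ t₄ = s₄ := by
  obtain ⟨h₂₃, h₁₃, h₁₂₃, h₂₄⟩ := invariants_eq_of_x₂_mul_x₁_mul_x₂_mul_x₁_eq h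
  exact eq_of_invariants_eq hs₂ hs₃ h₂₃ h₁₃ h₁₂₃ h₂₄

/-- The map `(ℂ*)⁴ → SL₂(ℂ[z])`, `(t₁,t₂,t₃,t₄) ↦ x₂(t₄)x₁(t₃)x₂(t₂)x₁(t₁)`,
is injective. -/
theorem x2121_injective (t₁ t₂ t₃ t₄ s₁ s₂ s₃ s₄ : ℂ)
    (ht₁ : t₁ ≠ 0) (ht₂ : t₂ ≠ 0) (ht₃ : t₃ ≠ 0) (ht₄ : t₄ ≠ 0)
    (hs₁ : s₁ ≠ 0) (hs₂ : s₂ ≠ 0) (hs₃ : s₃ ≠ 0) (hs₄ : s₄ ≠ 0)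
    (h : x₂ t₄ * x₁ t₃ * x₂ t₂ * x₁ t₁ = x₂ s₄ * x₁ s₃ * x₂ s₂ * x₁ s₁) :
    t₁ = s₁ ∧ t₂ = s₂ ∧ t₃ = s₃ ∧ t₄ = s₄ :=
  x2121_injective_general t₁ t₂ t₃ t₄ s₁ s₂ s₃ s₄ hs₂ hs₃ h
end
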